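/- arXiv:1911.00705 — 2 statements merged into one kernel-verified Lean document; each statement's English description precedes it below -/
import Mathlib

section
/- In LDGV, duality is antitone with respect to subtyping: if Γ ⊢ R ≤ S : κ for session types R and S, then Γ ⊢ dual(S) ≤ dual(R) : κ. -/
/-- Multiplicities. -/
inductive Mult : Type
  | lin
  | un

/-- Subkinding on multiplicities. -/
inductive MSub : Mult → Mult → Prop
  | refl {m} : MSub m m
  | unLin : MSub .un .lin

/-- LDGV kinds: a multiplicity together with a flag recording whether the kind
is a session kind. -/
structure Kind : Type where
  mult : Mult
  session : Bool

/-- Subkinding on kinds: multiplicities are related by `MSub` and a session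
kind may be weakened to the corresponding non-session kind. -/
def KSub (κ κ' : Kind) : Prop :=
  MSub κ.mult κ'.mult ∧ (κ.session = κ'.session ∨ (κ.session = true ∧ κ'.session = false))

/-- LDGV values occurring in types: names and labels. -/
inductive Val : Type
  | var (x : String)
  | lab (ℓ : String)

/-- LDGV types (including session types):
A ::= Unit | End | L | V =_L W | case V of {ℓ:Aℓ} | Π_m(x:A)B | Σ(x:A)B
      | !(x:A)S | ?(x:A)S. -/
inductive DTy : Type
  | unit : DTy
  | endT : DTy
  | lty (L : Finset String) : DTy
  | eqT (L : Finset String) (V W : Val) : DTy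
  | tcase (V : Val) (L : Finset String) (f : String → DTy) : DTy
  | pi (m : Mult) (x : String) (A B : DTy) : DTy
  | sigma (x : String) (A B : DTy) : DTy
  | send (x : String) (A S : DTy) : DTy
  | recv (x : String) (A S : DTy) : DTy

/-- LDGV typing environments. -/
abbrev DEnv := List (String × DTy)

/-- Conditional extension Γ + [x:A]: extend Γ with x:A only when A is
unrestricted. -/
def condExt (Γ : DEnv) (x : String) (A : DTy) : Mult → DEnv
  | .un => (x, A) :: Γ
  | .lin => Γ

/-- Typing of values at a label type. -/
def ValTy (Γ : DEnv) (V : Val) (L : Finset String) : Prop :=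
  (∃ ℓ ∈ L, V = .lab ℓ) ∨ (∃ x, V = .var x ∧ (x, .lty L) ∈ Γ)

/-- LDGV type formation Γ ⊢ A : κ. -/
inductive DKind : DEnv → DTy → Kind → Prop
  | unit {Γ} : DKind Γ .unit ⟨.un, true⟩
  | endT {Γ} : DKind Γ .endT ⟨.un, true⟩
  | lty {Γ} {L : Finset String} : L.Nonempty → DKind Γ (.lty L) ⟨.un, false⟩
  | eqT {Γ L V W} : ValTy Γ V L → ValTy Γ W L → DKind Γ (.eqT L V W) ⟨.un, false⟩
  | tcase {Γ V L f κ} (z : String) : ValTy Γ V L →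
      (∀ ℓ ∈ L, DKind ((z, .eqT L V (.lab ℓ)) :: Γ) (f ℓ) κ) →
      DKind Γ (.tcase V L f) κ
  | pi {Γ m x A B n s κ'} : DKind Γ A ⟨n, s⟩ → DKind (condExt Γ x A n) B κ' →
      DKind Γ (.pi m x A B) ⟨m, false⟩
  | sigma {Γ m x A B n s n' s'} : DKind Γ A ⟨n, s⟩ →
      DKind (condExt Γ x A n) B ⟨n', s'⟩ → MSub n m → MSub n' m →
      DKind Γ (.sigma x A B) ⟨m, false⟩
  | send {Γ x A S n s m} : DKind Γ A ⟨n, s⟩ →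
      DKind (condExt Γ x A n) S ⟨m, true⟩ →
      DKind Γ (.send x A S) ⟨.lin, true⟩
  | recv {Γ x A S n s m} : DKind Γ A ⟨n, s⟩ →
      DKind (condExt Γ x A n) S ⟨m, true⟩ →
      DKind Γ (.recv x A S) ⟨.lin, true⟩
  | sub {Γ A κ κ'} : DKind Γ A κ → KSub κ κ' → DKind Γ A κ'

/-- Duality of LDGV session types: swaps send and receive, commutes with case,
fixes End (and is the identity on non-session types). -/
def DTy.dual : DTy → DTy
  | .send x A S => .recv x A S.dual
  | .recv x A S => .send x A S.dual
  | .tcase V L f => .tcase V L (fun ℓ => (f ℓ).dual)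
  | .endT => .endT
  | .unit => .unit
  | .lty L => .lty L
  | .eqT L V W => .eqT L V W
  | .pi m x A B => .pi m x A B
  | .sigma x A B => .sigma x A B

/-- The predicate singling out session types among LDGV types. -/
inductive IsSession : DTy → Prop
  | endT : IsSession .endT
  | send {x A S} : IsSession S → IsSession (.send x A S)
  | recv {x A S} : IsSession S → IsSession (.recv x A S)
  | tcase {V L f} : (∀ ℓ ∈ L, IsSession (f ℓ)) → IsSession (.tcase V L f)

/-- LDGV type conversion Γ ⊢ A ≡ B : κ (reflexivity, symmetry, transitivity,
beta-reduction of cases on known labels, and substitution along equations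
recorded in the environment). -/
inductive Conv : DEnv → DTy → DTy → Kind → Prop
  | refl {Γ A κ} : DKind Γ A κ → Conv Γ A A κ
  | symm {Γ A B κ} : Conv Γ A B κ → Conv Γ B A κ
  | trans {Γ A B C κ} : Conv Γ A B κ → Conv Γ B C κ → Conv Γ A C κ
  | beta {Γ ℓ} {L : Finset String} {f κ} : ℓ ∈ L →
      DKind Γ (.tcase (.lab ℓ) L f) κ → Conv Γ (.tcase (.lab ℓ) L f) (f ℓ) κ
  | subst {Γ z x ℓ} {L : Finset String} {f κ} :
      (z, DTy.eqT L (.var x) (.lab ℓ)) ∈ Γ →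
      DKind Γ (.tcase (.var x) L f) κ → Conv Γ (.tcase (.var x) L f) (f ℓ) κ

/-- LDGV subtyping Γ ⊢ A ≤ B : κ. -/
inductive DSub : DEnv → DTy → DTy → Kind → Prop
  | conv {Γ A B κ} : Conv Γ A B κ → DSub Γ A B κ
  | lab {Γ} {L L' : Finset String} : L ⊆ L' → DSub Γ (.lty L) (.lty L') ⟨.un, false⟩
  | trans {Γ A B C κ} : DSub Γ A B κ → DSub Γ B C κ → DSub Γ A C κ
  | sub {Γ A B κ κ'} : DSub Γ A B κ → KSub κ κ' → DSub Γ A B κ'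
  | pi {Γ x A A' B B' m n nA sA κB} : DSub Γ A' A ⟨nA, sA⟩ →
      DSub (condExt Γ x A' nA) B B' κB → MSub m n →
      DSub Γ (.pi m x A B) (.pi n x A' B') ⟨n, false⟩
  | sigma {Γ x A A' B B' nA sA κB} : DSub Γ A A' ⟨nA, sA⟩ →
      DSub (condExt Γ x A nA) B B' κB →
      DSub Γ (.sigma x A B) (.sigma x A' B') κB
  | send {Γ x A A' S S' nA sA m} : DSub Γ A' A ⟨nA, sA⟩ →
      DSub (condExt Γ x A' nA) S S' ⟨m, true⟩ →
      DSub Γ (.send x A S) (.send x A' S') ⟨.lin, true⟩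
  | recv {Γ x A A' S S' nA sA m} : DSub Γ A A' ⟨nA, sA⟩ →
      DSub (condExt Γ x A nA) S S' ⟨m, true⟩ →
      DSub Γ (.recv x A S) (.recv x A' S') ⟨.lin, true⟩
  | scase {Γ V} {L L' : Finset String} {f f' κ} (z : String) :
      ValTy Γ V (L ∩ L') →
      (∀ ℓ ∈ L ∩ L',
        DSub ((z, DTy.eqT (L ∩ L') V (.lab ℓ)) :: Γ) (f ℓ) (f' ℓ) κ) →
      DSub Γ (.tcase V L f) (.tcase V L' f') κ


/-- Quasi-dual: behaves like `dual` on session structure, but collapses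
junk-headed types to `unit`; on case branches outside the label set it keeps
the plain dual. -/
def qd : DTy → DTy
  | .unit => .unit
  | .endT => .endT
  | .lty _ => .unit
  | .eqT _ _ _ => .unit
  | .pi _ _ _ _ => .unit
  | .sigma _ _ _ => .unit
  | .send x A S => .recv x A (qd S)
  | .recv x A S => .send x A (qd S)
  | .tcase V L f => .tcase V L (fun ℓ => if ℓ ∈ L then qd (f ℓ) else (f ℓ).dual)

/-- `unit` has every kind. -/
lemma dkind_unit (Γ : DEnv) (κ : Kind) : DKind Γ .unit κ := by
  obtain ⟨m, s⟩ := κ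
  refine DKind.sub DKind.unit ⟨?_, ?_⟩
  · cases m
    · exact MSub.unLin
    · exact MSub.refl
  · cases s
    · exact Or.inr ⟨rfl, rfl⟩
    · exact Or.inl rfl

/-- On session types, the quasi-dual agrees with the dual. -/
lemma session_qd {T : DTy} (h : IsSession T) : qd T = T.dual := by
  induction h with
  | endT => rfl
  | send _ ih => simp [qd, DTy.dual, ih]
  | recv _ ih => simp [qd, DTy.dual, ih]
  | @tcase V L f _ ih =>
      simp only [qd, DTy.dual]
      congr 1
      funext ℓ
      by_cases hℓ : ℓ ∈ L
      · simp [hℓ, ih ℓ hℓ]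
      · simp [hℓ]

/-- The quasi-dual preserves kinding. -/
lemma dkind_qd {Γ A κ} (h : DKind Γ A κ) : DKind Γ (qd A) κ := by
  induction h with
  | unit => exact DKind.unit
  | endT => exact DKind.endT
  | lty _ => exact dkind_unit _ _
  | eqT _ _ => exact dkind_unit _ _
  | @tcase Γ V L f κ z hv _ ih =>
      simp only [qd]
      exact DKind.tcase z hv (fun ℓ hℓ => by
        simp only [if_pos hℓ]
        exact ih ℓ hℓ)
  | pi _ _ _ _ => exact dkind_unit _ _
  | sigma _ _ _ _ _ _ => exact dkind_unit _ _
  | send hA _ _ ihS => exact DKind.recv hA ihS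
  | recv hA _ _ ihS => exact DKind.send hA ihS
  | sub _ hk ih => exact DKind.sub ih hk

/-- A kinded case type has a well-typed scrutinee. -/
lemma valty_of_tcase {Γ T κ} (h : DKind Γ T κ) :
    ∀ {V L f}, T = DTy.tcase V L f → ValTy Γ V L := by
  induction h with
  | unit => intro _ _ _ he; cases he
  | endT => intro _ _ _ he; cases he
  | lty _ => intro _ _ _ he; cases he
  | eqT _ _ => intro _ _ _ he; cases he
  | tcase z hv _ _ =>
      intro V L f he
      injection he with h1 h2 h3
      subst h1; subst h2
      exact hv
  | pi _ _ _ _ => intro _ _ _ he; cases he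
  | sigma _ _ _ _ _ _ => intro _ _ _ he; cases he
  | send _ _ _ _ => intro _ _ _ he; cases he
  | recv _ _ _ _ => intro _ _ _ he; cases he
  | sub _ _ ih => intro _ _ _ he; exact ih he

/-- "Slot power": the environment contains an equation whose label lies
outside the label set of a well-typed scrutinee.  Such an environment is
inconsistent enough to collapse subtyping entirely. -/
def SP (Γ : DEnv) : Prop :=
  ∃ x L ℓ z, ((z, DTy.eqT L (.var x) (.lab ℓ)) ∈ Γ) ∧ ℓ ∉ L ∧ ValTy Γ (.var x) L

/-- Slot power collapses subtyping: any two types are related at any kind. -/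
lemma sp_dsub {Γ} (h : SP Γ) (T U : DTy) (κ : Kind) : DSub Γ T U κ := by
  obtain ⟨x, L, ℓ, z, hin, hout, hv⟩ := h
  have hk : ∀ W : DTy,
      DKind Γ (.tcase (.var x) L (fun ℓ' => if ℓ' = ℓ then W else .unit)) κ := by
    intro W
    refine DKind.tcase z hv (fun ℓ' hℓ' => ?_)
    have hne : ℓ' ≠ ℓ := fun he => hout (he ▸ hℓ')
    simp only [if_neg hne]
    exact dkind_unit _ _
  have hc : ∀ W : DTy,
      Conv Γ (.tcase (.var x) L (fun ℓ' => if ℓ' = ℓ then W else .unit)) W κ := by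
    intro W
    have := Conv.subst (f := fun ℓ' => if ℓ' = ℓ then W else .unit) hin (hk W)
    simpa using this
  have hmid : DSub Γ (.tcase (.var x) L (fun ℓ' => if ℓ' = ℓ then T else .unit))
      (.tcase (.var x) L (fun ℓ' => if ℓ' = ℓ then U else .unit)) κ := by
    refine DSub.scase z ?_ ?_
    · simpa [Finset.inter_self] using hv
    · intro ℓ' hℓ'
      have h1 : ℓ' ∈ L := by
        have := Finset.mem_inter.mp hℓ'
        exact this.1
      have hne : ℓ' ≠ ℓ := fun he => hout (he ▸ h1)
      simp only [if_neg hne]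
      exact DSub.conv (Conv.refl (dkind_unit _ _))
  exact DSub.trans (DSub.trans (DSub.conv (Conv.symm (hc T))) hmid)
    (DSub.conv (hc U))

/-- Conversion is congruent for the quasi-dual, unless the environment has
slot power. -/
lemma conv_qd {Γ A B κ} (h : Conv Γ A B κ) :
    SP Γ ∨ Conv Γ (qd A) (qd B) κ := by
  induction h with
  | refl hk => exact Or.inr (Conv.refl (dkind_qd hk))
  | symm _ ih => exact ih.imp id Conv.symm
  | trans _ _ ih1 ih2 =>
      rcases ih1 with sp | c1
      · exact Or.inl sp
      rcases ih2 with sp | c2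
      · exact Or.inl sp
      exact Or.inr (Conv.trans c1 c2)
  | @beta ℓ L f κ hm hk =>
      right
      have hq := dkind_qd hk
      simp only [qd] at hq
      have := Conv.beta (f := fun ℓ' => if ℓ' ∈ L then qd (f ℓ') else (f ℓ').dual)
        hm hq
      simp only [qd]
      simpa [if_pos hm] using this
  | @subst z x ℓ L f κ hin hk =>
      by_cases hL : ℓ ∈ L
      · right
        have hq := dkind_qd hk
        simp only [qd] at hq
        have := Conv.subst (f := fun ℓ' => if ℓ' ∈ L then qd (f ℓ') else (f ℓ').dual)
          hin hq
        simp only [qd]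
        simpa [if_pos hL] using this
      · exact Or.inl ⟨x, L, ℓ, z, hin, hL, valty_of_tcase hk rfl⟩

/-- Main lemma: subtyping flips under the quasi-dual. -/
lemma dsub_qd {Γ A B κ} (h : DSub Γ A B κ) : DSub Γ (qd B) (qd A) κ := by
  induction h with
  | conv hc =>
      rcases conv_qd hc with sp | c
      · exact sp_dsub sp _ _ _
      · exact DSub.conv (Conv.symm c)
  | lab _ => exact DSub.conv (Conv.refl (dkind_unit _ _))
  | trans _ _ ih1 ih2 => exact DSub.trans ih2 ih1
  | sub _ hk ih => exact DSub.sub ih hk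
  | pi _ _ _ _ _ => exact DSub.conv (Conv.refl (dkind_unit _ _))
  | sigma _ _ _ _ => exact DSub.conv (Conv.refl (dkind_unit _ _))
  | send h1 _ _ ih2 => exact DSub.recv h1 ih2
  | recv h1 _ _ ih2 => exact DSub.send h1 ih2
  | @scase Γ V L L' f f' κ z hv _ ih =>
      simp only [qd]
      refine DSub.scase z ?_ ?_
      · rw [Finset.inter_comm]
        exact hv
      · intro ℓ hℓ
        have hL' : ℓ ∈ L' := (Finset.mem_inter.mp hℓ).1
        have hL : ℓ ∈ L := (Finset.mem_inter.mp hℓ).2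
        simp only [if_pos hL, if_pos hL']
        have := ih ℓ (Finset.mem_inter.mpr ⟨hL, hL'⟩)
        rw [Finset.inter_comm L' L]
        exact this

/-- Duality is antitone with respect to LDGV subtyping: if Γ ⊢ R ≤ S : κ for
session types R and S, then Γ ⊢ dual S ≤ dual R : κ. -/
theorem dual_antitone (Γ : DEnv) (R S : DTy) (κ : Kind) :
    IsSession R → IsSession S → DSub Γ R S κ → DSub Γ S.dual R.dual κ := by
  intro hR hS h
  have hq := dsub_qd h
  rwa [session_qd hR, session_qd hS] at hq
end

section
/- Duality with polarized type variables for the natural-number recursor is an involution: for session types of the extended LDGV with polarized variables α⁺, α⁻ and the type recursor, dual(dual(S)) = S, where dual(rec V S (α.R)) applies dual to S, applies dual to R flipping the polarity of occurrences of the recursion variable, and dual(α⁺) = α⁻, dual(α⁻) = α⁺. -/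
/-- Polarities for type variables. -/
inductive Pol : Type
  | pos
  | neg

/-- Flip a polarity. -/
def Pol.flip : Pol → Pol
  | .pos => .neg
  | .neg => .pos

/-- Extended LDGV session types with a polarized recursion variable α and the
type recursor, parameterized over payload types `Ty` and values `Val`:
S ::= End | !(x:A)S | ?(x:A)S | case V of {ℓ:Sℓ} | α_p | rec V S (α.R). -/
inductive PTy (Ty Val : Type) : Type
  | endT : PTy Ty Val
  | send (x : String) (A : Ty) (S : PTy Ty Val) : PTy Ty Val
  | recv (x : String) (A : Ty) (S : PTy Ty Val) : PTy Ty Val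
  | pcase (V : Val) (L : List String) (f : String → PTy Ty Val) : PTy Ty Val
  | pvar (p : Pol) : PTy Ty Val
  | recT (V : Val) (S : PTy Ty Val) (R : PTy Ty Val) : PTy Ty Val
      -- rec V S (α.R): the recursion variable α is bound in R

/-- Flip the polarity of all (free) occurrences of the recursion variable;
it does not descend into the body of a recursor, where the variable is
rebound. -/
def PTy.swap {Ty Val : Type} : PTy Ty Val → PTy Ty Val
  | .pvar p => .pvar p.flip
  | .send x A S => .send x A S.swap
  | .recv x A S => .recv x A S.swap
  | .pcase V L f => .pcase V L (fun ℓ => (f ℓ).swap)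
  | .recT V S R => .recT V S.swap R
  | .endT => .endT

/-- Duality with polarized variables: dual(α⁺) = α⁻, dual(α⁻) = α⁺, swaps
send and receive, commutes with case and End, and
dual(rec V S (α.R)) = rec V (dual S) (α. swap_α (dual R)). -/
def PTy.dual {Ty Val : Type} : PTy Ty Val → PTy Ty Val
  | .pvar p => .pvar p.flip
  | .send x A S => .recv x A S.dual
  | .recv x A S => .send x A S.dual
  | .pcase V L f => .pcase V L (fun ℓ => (f ℓ).dual)
  | .recT V S R => .recT V S.dual (PTy.swap R.dual)
  | .endT => .endT

theorem PTy.swap_swap {Ty Val : Type} (S : PTy Ty Val) : S.swap.swap = S := by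
  induction S with
  | pvar p => cases p <;> rfl
  | pcase V L f ih => simp [PTy.swap]; funext ℓ; exact ih ℓ
  | _ => simp_all [PTy.swap]

theorem PTy.dual_swap {Ty Val : Type} (S : PTy Ty Val) : S.swap.dual = S.dual.swap := by
  induction S with
  | pvar p => cases p <;> rfl
  | pcase V L f ih => simp [PTy.swap, PTy.dual]; funext ℓ; exact ih ℓ
  | _ => simp_all [PTy.swap, PTy.dual]

/-- Duality with polarized type variables is an involution. -/
theorem PTy.dual_dual {Ty Val : Type} (S : PTy Ty Val) : S.dual.dual = S := by
  induction S with
  | pvar p => cases p <;> rfl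
  | pcase V L f ih => simp [PTy.dual]; funext ℓ; exact ih ℓ
  | _ => simp_all [PTy.dual, PTy.dual_swap, PTy.swap_swap]
end
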